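/- The function C_H(s,t) = (s^{2H} + t^{2H} − |s−t|^{2H})/2 on [0,∞)^2 is positive semidefinite for every H ∈ (0,1]. -/

import Mathlib

/-!
Write `α = 2H`. For `0 < α < 2` the substitution `v = |x| u` gives
`∫₀^∞ (1 - cos (x u)) u^(-1-α) du = c_α |x|^α` with `c_α > 0`. Since
`(1 - cos x) + (1 - cos y) - (1 - cos (x - y)) = (1 - cos x)(1 - cos y) + sin x sin y`,
at each frequency `u` the kernel `|s|^α + |t|^α - |s - t|^α` is thus represented by a sum of two
rank-one positive semidefinite kernels, and integrating over `u` preserves positive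
semidefiniteness. For `α = 2` the kernel is `2 s t`.
-/

open MeasureTheory Real Set

section QuadraticForm

variable {ι : Type*} [Fintype ι]

lemma sum_sum_mul_one_sub_cos_nonneg (a x : ι → ℝ) :
    0 ≤ ∑ i, ∑ j,
      a i * a j * ((1 - cos (x i)) + (1 - cos (x j)) - (1 - cos (x i - x j))) := by
  have hpoint : ∀ i j, (1 - cos (x i)) + (1 - cos (x j)) - (1 - cos (x i - x j))
      = (1 - cos (x i)) * (1 - cos (x j)) + sin (x i) * sin (x j) := by
    intro i j
    rw [cos_sub]
    ring
  have hsq : ∑ i, ∑ j, a i * a j * ((1 - cos (x i)) + (1 - cos (x j)) - (1 - cos (x i - x j)))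
      = (∑ i, a i * (1 - cos (x i))) ^ 2 + (∑ i, a i * sin (x i)) ^ 2 := by
    simp only [hpoint, sq, Finset.sum_mul_sum, ← Finset.sum_add_distrib]
    refine Finset.sum_congr rfl fun i _ => Finset.sum_congr rfl fun j _ => ?_
    ring
  rw [hsq]
  positivity

lemma sum_sum_mul_integral_nonneg {X : Type*} [MeasurableSpace X] {μ : Measure X}
    (a : ι → ℝ) {k : ι → ι → X → ℝ} (hk : ∀ i j, Integrable (k i j) μ)
    (hpos : ∀ᵐ u ∂μ, 0 ≤ ∑ i, ∑ j, a i * a j * k i j u) :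
    0 ≤ ∑ i, ∑ j, a i * a j * ∫ u, k i j u ∂μ := by
  have hint : ∀ i j, Integrable (fun u => a i * a j * k i j u) μ :=
    fun i j => (hk i j).const_mul _
  calc 0 ≤ ∫ u, ∑ i, ∑ j, a i * a j * k i j u ∂μ := integral_nonneg_of_ae hpos
    _ = ∑ i, ∑ j, a i * a j * ∫ u, k i j u ∂μ := by
      rw [integral_finsetSum _ fun i _ => integrable_finsetSum _ fun j _ => hint i j]
      refine Finset.sum_congr rfl fun i _ => ?_
      rw [integral_finsetSum _ fun j _ => hint i j]
      simp only [integral_const_mul]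

end QuadraticForm

section StableIntegrand

noncomputable def stableIntegrand (α x u : ℝ) : ℝ := (1 - cos (x * u)) * u ^ (-1 - α)

variable {α : ℝ}

lemma stableIntegrand_nonneg (x : ℝ) {u : ℝ} (hu : 0 ≤ u) : 0 ≤ stableIntegrand α x u :=
  mul_nonneg (sub_nonneg.2 (cos_le_one _)) (rpow_nonneg hu _)

lemma integrableOn_stableIntegrand (hα : 0 < α) (hα2 : α < 2) (x : ℝ) :
    IntegrableOn (stableIntegrand α x) (Ioi 0) := by
  have hmeas : AEStronglyMeasurable (stableIntegrand α x) := by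
    unfold stableIntegrand
    fun_prop
  rw [← Ioc_union_Ioi_eq_Ioi zero_le_one]
  refine IntegrableOn.union ?_ ?_
  · have hdom : IntegrableOn (fun u => x ^ 2 / 2 * u ^ (1 - α)) (Ioc 0 1) :=
      ((intervalIntegral.intervalIntegrable_rpow' (by linarith)).1).const_mul _
    refine hdom.mono' hmeas.restrict ((ae_restrict_iff' measurableSet_Ioc).2 <| .of_forall ?_)
    rintro u ⟨hu, -⟩
    rw [norm_of_nonneg (stableIntegrand_nonneg x hu.le)]
    have hpow : u ^ (1 - α) = u ^ 2 * u ^ (-1 - α) := by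
      rw [← rpow_two, ← rpow_add hu]
      ring_nf
    have hcos : 1 - cos (x * u) ≤ (x * u) ^ 2 / 2 := by
      linarith [one_sub_sq_div_two_le_cos (x := x * u)]
    calc stableIntegrand α x u ≤ (x * u) ^ 2 / 2 * u ^ (-1 - α) :=
          mul_le_mul_of_nonneg_right hcos (rpow_nonneg hu.le _)
      _ = x ^ 2 / 2 * u ^ (1 - α) := by rw [hpow]; ring
  · have hdom : IntegrableOn (fun u : ℝ => 2 * u ^ (-1 - α)) (Ioi 1) :=
      (integrableOn_Ioi_rpow_of_lt (by linarith) one_pos).const_mul 2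
    refine hdom.mono' hmeas.restrict ((ae_restrict_iff' measurableSet_Ioi).2 <| .of_forall ?_)
    intro u (hu : 1 < u)
    rw [norm_of_nonneg (stableIntegrand_nonneg x (by linarith))]
    exact mul_le_mul_of_nonneg_right (by linarith [neg_one_le_cos (x * u)])
      (rpow_nonneg (by linarith) _)

lemma integral_stableIntegrand_of_pos {x : ℝ} (hx : 0 < x) :
    ∫ u in Ioi 0, stableIntegrand α x u = x ^ α * ∫ u in Ioi 0, stableIntegrand α 1 u := by
  have hscale : ∀ u ∈ Ioi (0 : ℝ),
      stableIntegrand α x u = x ^ (1 + α) * stableIntegrand α 1 (x * u) := by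
    intro u (hu : 0 < u)
    simp only [stableIntegrand, one_mul, mul_rpow hx.le hu.le]
    rw [mul_left_comm, ← mul_assoc (x ^ (1 + α)), ← rpow_add hx]
    simp
  rw [setIntegral_congr_fun measurableSet_Ioi hscale, integral_const_mul,
    integral_comp_mul_left_Ioi _ _ hx, mul_zero, smul_eq_mul, ← mul_assoc, ← rpow_neg_one,
    ← rpow_add hx]
  ring_nf

lemma integral_stableIntegrand (hα : α ≠ 0) (x : ℝ) :
    ∫ u in Ioi 0, stableIntegrand α x u = |x| ^ α * ∫ u in Ioi 0, stableIntegrand α 1 u := by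
  rcases lt_trichotomy x 0 with hx | rfl | hx
  · have hneg : stableIntegrand α x = stableIntegrand α (-x) := by
      funext u
      simp [stableIntegrand]
    rw [hneg, integral_stableIntegrand_of_pos (neg_pos.2 hx), abs_of_neg hx]
  · simp [stableIntegrand, zero_rpow hα]
  · rw [integral_stableIntegrand_of_pos hx, abs_of_pos hx]

lemma integral_stableIntegrand_one_pos (hα : 0 < α) (hα2 : α < 2) :
    0 < ∫ u in Ioi 0, stableIntegrand α 1 u := by
  rw [setIntegral_pos_iff_support_of_nonneg_ae
    ((ae_restrict_iff' measurableSet_Ioi).2 <| .of_forall fun u hu =>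
      stableIntegrand_nonneg 1 (le_of_lt hu))
    (integrableOn_stableIntegrand hα hα2 1)]
  refine ((Measure.measure_Ioo_pos volume).2 zero_lt_one).trans_le
    (measure_mono fun u ⟨hu0, hu1⟩ => ⟨?_, hu0⟩)
  have hcos : cos u ≠ 1 := by
    rw [Ne, cos_eq_one_iff_of_lt_of_lt (by linarith [pi_pos]) (by linarith [pi_gt_three])]
    exact hu0.ne'
  exact mul_ne_zero (sub_ne_zero.2 (by simpa using hcos.symm)) (rpow_pos_of_pos hu0 _).ne'

end StableIntegrand

section Covariance

noncomputable def fbmCovariance (H s t : ℝ) : ℝ :=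
  (|s| ^ (2 * H) + |t| ^ (2 * H) - |s - t| ^ (2 * H)) / 2

variable {ι : Type*} [Fintype ι]

lemma fbmCovariance_eq_integral {H : ℝ} (hH : 0 < H) (hH1 : H < 1) (s t : ℝ) :
    fbmCovariance H s t = ∫ u in Ioi 0,
      (stableIntegrand (2 * H) s u + stableIntegrand (2 * H) t u
        - stableIntegrand (2 * H) (s - t) u)
      / (2 * ∫ v in Ioi 0, stableIntegrand (2 * H) 1 v) := by
  have hα : 0 < 2 * H := by positivity
  have hI := integral_stableIntegrand_one_pos hα (by linarith)
  have hint := integrableOn_stableIntegrand hα (by linarith)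
  rw [integral_div,
    integral_sub (f := fun u => stableIntegrand (2 * H) s u + stableIntegrand (2 * H) t u)
      ((hint s).add (hint t)) (hint _),
    integral_add (hint s) (hint t),
    integral_stableIntegrand hα.ne' s, integral_stableIntegrand hα.ne' t,
    integral_stableIntegrand hα.ne' (s - t), fbmCovariance]
  field_simp

lemma sum_sum_mul_fbmCovariance_nonneg_of_lt_one {H : ℝ} (hH : 0 < H) (hH1 : H < 1)
    (t a : ι → ℝ) : 0 ≤ ∑ i, ∑ j, a i * a j * fbmCovariance H (t i) (t j) := by
  have hα : 0 < 2 * H := by positivity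
  have hint := integrableOn_stableIntegrand hα (by linarith)
  simp only [fbmCovariance_eq_integral hH hH1]
  refine sum_sum_mul_integral_nonneg a
    (fun i j => (((hint _).add (hint _)).sub (hint _)).div_const _)
    ((ae_restrict_iff' measurableSet_Ioi).2 <| .of_forall fun u (hu : 0 < u) => ?_)
  have hfactor : ∀ s r, stableIntegrand (2 * H) s u + stableIntegrand (2 * H) r u
      - stableIntegrand (2 * H) (s - r) u
      = ((1 - cos (s * u)) + (1 - cos (r * u)) - (1 - cos (s * u - r * u)))
        * u ^ (-1 - 2 * H) := by
    intro s r
    simp only [stableIntegrand, sub_mul s r]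
    ring
  simp only [hfactor, mul_div_assoc, ← mul_assoc, ← Finset.sum_mul]
  have hI := integral_stableIntegrand_one_pos hα (by linarith)
  exact mul_nonneg (sum_sum_mul_one_sub_cos_nonneg a fun i => t i * u) (by positivity)

lemma sum_sum_mul_fbmCovariance_one_nonneg (t a : ι → ℝ) :
    0 ≤ ∑ i, ∑ j, a i * a j * fbmCovariance 1 (t i) (t j) := by
  have hprod : ∀ s r : ℝ, fbmCovariance 1 s r = s * r := by
    intro s r
    simp only [fbmCovariance, mul_one, rpow_two, sq_abs]
    ring
  simp only [hprod, mul_mul_mul_comm _ _ (t _), ← Finset.mul_sum, ← Finset.sum_mul]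
  exact mul_self_nonneg _

end Covariance

/-- The fBm covariance kernel `C_H(s,t) = (s^{2H} + t^{2H} − |s−t|^{2H})/2` is positive
semidefinite on `[0,∞)` for every `H ∈ (0,1]`. -/
theorem fbm_covariance_posSemidef (H : ℝ) (hH : 0 < H ∧ H ≤ 1) (n : ℕ)
    (t : Fin n → ℝ) (ht : ∀ i, 0 ≤ t i) (a : Fin n → ℝ) :
    0 ≤ ∑ i, ∑ j,
      a i * a j * ((t i ^ (2 * H) + t j ^ (2 * H) - |t i - t j| ^ (2 * H)) / 2) := by
  have hcov : ∀ i j, (t i ^ (2 * H) + t j ^ (2 * H) - |t i - t j| ^ (2 * H)) / 2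
      = fbmCovariance H (t i) (t j) := by
    intro i j
    rw [fbmCovariance, abs_of_nonneg (ht i), abs_of_nonneg (ht j)]
  simp only [hcov]
  rcases hH.2.lt_or_eq with hH1 | rfl
  · exact sum_sum_mul_fbmCovariance_nonneg_of_lt_one hH.1 hH1 t a
  · exact sum_sum_mul_fbmCovariance_one_nonneg t a
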